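/- arXiv:2001.01463 — 3 statements merged into one kernel-verified Lean document; each statement's English description precedes it below -/
import Mathlib

section
/- Let ℓ ≥ 2 be an integer and let Δ ≥ 2 be an even integer. Then there exist simple graphs G₁, …, G_ℓ on a common finite vertex set, each of maximum degree at most Δ, such that every simultaneous edge-coloring of their union with respect to G₁, …, G_ℓ uses at least ⌊√(ℓ/2)⌋·Δ colors. -/
/-!
With `k = ⌊√(ℓ/2)⌋`, split the `kΔ` leaves of a star into `2k` blocks of `Δ / 2` leaves, and for
every pair of distinct blocks take the substar on the leaves of those two blocks. Each substar has
maximum degree `Δ`, there are `C(2k, 2) ≤ 2k² ≤ ℓ` of them, and any two leaves lie in a common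
one, so a simultaneous coloring gives all `kΔ` edges of the star distinct colors.
-/

/-- An edge-coloring `c` (a function on potential edges) is *simultaneous* with respect to
the family of graphs `G` if, for each `i`, any two distinct edges of `G i` sharing an
endpoint receive distinct colors. -/
def Simultaneous {V ι β : Type*} (G : ι → SimpleGraph V) (c : Sym2 V → β) : Prop :=
  ∀ i, ∀ e ∈ (G i).edgeSet, ∀ f ∈ (G i).edgeSet, e ≠ f → (∃ v, v ∈ e ∧ v ∈ f) → c e ≠ c f

open SimpleGraph

variable {ι S : Type*}

def optionStar (A : Set S) : SimpleGraph (Option S) :=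
  fromRel fun u v ↦ u = none ∧ v ∈ some '' A

lemma optionStar_adj_none_some {A : Set S} {x : S} :
    (optionStar A).Adj none (some x) ↔ x ∈ A := by
  simp [optionStar]

lemma neighborSet_optionStar_none (A : Set S) :
    (optionStar A).neighborSet none = some '' A := by
  ext (_ | x) <;> simp [optionStar]

open Classical in
lemma neighborSet_optionStar_some (A : Set S) (x : S) :
    (optionStar A).neighborSet (some x) = if x ∈ A then {none} else ∅ := by
  ext (_ | y) <;> split_ifs <;> simp_all [optionStar]

lemma ncard_neighborSet_optionStar_le [Finite S] {A : Set S} {m : ℕ} (hA : A.ncard ≤ m)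
    (v : Option S) : ((optionStar A).neighborSet v).ncard ≤ m := by
  cases v with
  | none =>
    rwa [neighborSet_optionStar_none, Set.ncard_image_of_injective _ (Option.some_injective S)]
  | some x =>
    classical
    rw [neighborSet_optionStar_some]
    split_ifs with hx
    · exact (Set.ncard_singleton _).trans_le <| ((Set.ncard_pos).2 ⟨x, hx⟩).trans_le hA
    · simp

def IsPairCover (m : ℕ) (A : ι → Set S) : Prop :=
  (∀ i, (A i).ncard ≤ m) ∧ ∀ x y, ∃ i, x ∈ A i ∧ y ∈ A i

lemma IsPairCover.exists_fin [Fintype ι] {m ℓ : ℕ} {A : ι → Set S} (hA : IsPairCover m A)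
    (hι : Fintype.card ι ≤ ℓ) : ∃ B : Fin ℓ → Set S, IsPairCover m B := by
  obtain ⟨e⟩ : Nonempty (ι ↪ Fin ℓ) := Function.Embedding.nonempty_of_card_le (by simpa using hι)
  refine ⟨Function.extend e A fun _ ↦ ∅, fun j ↦ ?_, fun x y ↦ ?_⟩
  · by_cases hj : ∃ i, e i = j
    · obtain ⟨i, rfl⟩ := hj
      rw [e.injective.extend_apply]
      exact hA.1 i
    · simp [Function.extend_apply' _ _ _ hj]
  · obtain ⟨i, hi⟩ := hA.2 x y
    exact ⟨e i, by rwa [e.injective.extend_apply]⟩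

lemma Simultaneous.injective_optionStar {β : Type*} {m : ℕ} {A : ι → Set S}
    (hA : IsPairCover m A) {c : Sym2 (Option S) → β}
    (hc : Simultaneous (fun i ↦ optionStar (A i)) c) :
    Function.Injective fun x ↦ c s(none, some x) := by
  intro x y hxy
  by_contra hne
  obtain ⟨i, hx, hy⟩ := hA.2 x y
  refine hc i _ (optionStar_adj_none_some.2 hx) _ (optionStar_adj_none_some.2 hy) ?_
    ⟨none, Sym2.mem_mk_left _ _, Sym2.mem_mk_left _ _⟩ hxy
  simpa using hne

def blockPairs {β γ : Type*} (s : Sym2 β) : Set (β × γ) := {p | p.1 ∈ s}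

lemma isPairCover_blockPairs {β γ : Type*} [Nontrivial β] [Finite γ] :
    IsPairCover (2 * Nat.card γ)
      fun s : {s : Sym2 β // ¬s.IsDiag} ↦ (blockPairs s.1 : Set (β × γ)) := by
  refine ⟨fun ⟨s, _⟩ ↦ ?_, fun x y ↦ ?_⟩
  · dsimp only
    induction s using Sym2.ind with
    | h a b =>
      have hab : (blockPairs s(a, b) : Set (β × γ)) = {a, b} ×ˢ Set.univ := by
        ext; simp [blockPairs]
      rw [hab, Set.ncard_prod, Set.ncard_univ]
      gcongr
      exact (Set.ncard_insert_le _ _).trans (by simp)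
  · by_cases h : x.1 = y.1
    · obtain ⟨b, hb⟩ := exists_ne x.1
      exact ⟨⟨s(x.1, b), by simpa using hb.symm⟩, by simp [blockPairs, h]⟩
    · exact ⟨⟨s(x.1, y.1), by simpa using h⟩, by simp [blockPairs]⟩

lemma choose_two_two_mul_le (k : ℕ) : (2 * k).choose 2 ≤ 2 * k ^ 2 :=
  calc (2 * k).choose 2 = 2 * k * (2 * k - 1) / 2 := Nat.choose_two_right _
    _ ≤ 2 * k * (2 * k) / 2 := Nat.div_le_div_right (Nat.mul_le_mul_left _ (Nat.sub_le _ _))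
    _ = 2 * k ^ 2 := by
      rw [show 2 * k * (2 * k) = 2 * (2 * k ^ 2) by ring, Nat.mul_div_cancel_left _ two_pos]

lemma two_mul_sq_floor_sqrt_half_le (ℓ : ℕ) : 2 * ⌊√((ℓ : ℝ) / 2)⌋₊ ^ 2 ≤ ℓ := by
  have h := Nat.floor_le (Real.sqrt_nonneg ((ℓ : ℝ) / 2))
  rw [Real.le_sqrt (Nat.cast_nonneg _) (by positivity)] at h
  exact_mod_cast (by linarith : (2 * ⌊√((ℓ : ℝ) / 2)⌋₊ ^ 2 : ℝ) ≤ ℓ)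

lemma one_le_floor_sqrt_half {ℓ : ℕ} (hℓ : 2 ≤ ℓ) : 1 ≤ ⌊√((ℓ : ℝ) / 2)⌋₊ := by
  refine Nat.le_floor ?_
  rw [Nat.cast_one, Real.one_le_sqrt, le_div_iff₀ two_pos]
  exact_mod_cast (by omega : 1 * 2 ≤ ℓ)

theorem simultaneous_coloring_lower_bound_general (ℓ Δ : ℕ) (hℓ : 2 ≤ ℓ)
    (hEven : Even Δ) :
    ∃ (V : Type) (_ : Fintype V) (G : Fin ℓ → SimpleGraph V),
      (∀ i v, ((G i).neighborSet v).ncard ≤ Δ) ∧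
      ∀ (N : ℕ) (c : Sym2 V → Fin N), Simultaneous G c →
        ⌊Real.sqrt ((ℓ : ℝ) / 2)⌋₊ * Δ ≤ N := by
  set k := ⌊Real.sqrt ((ℓ : ℝ) / 2)⌋₊
  have : Nontrivial (Fin (2 * k)) :=
    Fin.nontrivial_iff_two_le.2 (by have := one_le_floor_sqrt_half hℓ; omega)
  have hcard : Fintype.card {s : Sym2 (Fin (2 * k)) // ¬s.IsDiag} ≤ ℓ := by
    rw [Sym2.card_subtype_not_diag, Fintype.card_fin]
    exact (choose_two_two_mul_le k).trans (two_mul_sq_floor_sqrt_half_le ℓ)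
  have hΔ : 2 * (Δ / 2) = Δ := Nat.two_mul_div_two_of_even hEven
  obtain ⟨A, hA⟩ := (isPairCover_blockPairs (β := Fin (2 * k)) (γ := Fin (Δ / 2))).exists_fin hcard
  refine ⟨Option (Fin (2 * k) × Fin (Δ / 2)), inferInstance, fun i ↦ optionStar (A i),
    fun i ↦ ncard_neighborSet_optionStar_le (by simpa [hΔ] using hA.1 i), fun N c hc ↦ ?_⟩
  calc k * Δ = Fintype.card (Fin (2 * k) × Fin (Δ / 2)) := by
        rw [Fintype.card_prod, Fintype.card_fin, Fintype.card_fin, mul_assoc, mul_left_comm, hΔ]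
    _ ≤ N := by simpa using Fintype.card_le_of_injective _ (hc.injective_optionStar hA)

theorem simultaneous_coloring_lower_bound (ℓ Δ : ℕ) (hℓ : 2 ≤ ℓ) (hΔ : 2 ≤ Δ)
    (hEven : Even Δ) :
    ∃ (V : Type) (_ : Fintype V) (G : Fin ℓ → SimpleGraph V),
      (∀ i v, ((G i).neighborSet v).ncard ≤ Δ) ∧
      ∀ (N : ℕ) (c : Sym2 V → Fin N), Simultaneous G c →
        ⌊Real.sqrt ((ℓ : ℝ) / 2)⌋₊ * Δ ≤ N :=
  simultaneous_coloring_lower_bound_general ℓ Δ hℓ hEven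
end

section
/- For every integer Δ ≥ 2 there exist three simple graphs G₁, G₂, G₃ on a common finite vertex set, each of maximum degree at most Δ, such that every simultaneous edge-coloring of their union with respect to G₁, G₂, G₃ uses at least 3·⌊Δ/2⌋ colors. -/
namespace SimpleGraph

def leafStar {V : Type*} (r : V) (L : Set V) : SimpleGraph V :=
  .fromRel fun v w ↦ v = r ∧ w ∈ L

variable {V : Type*} {r : V} {L : Set V}

theorem leafStar_adj_center {a : V} (ha : a ∈ L) (hr : a ≠ r) : (leafStar r L).Adj r a :=
  ⟨hr.symm, .inl ⟨rfl, ha⟩⟩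

theorem neighborSet_leafStar_center_subset : (leafStar r L).neighborSet r ⊆ L := by
  rintro w ⟨-, ⟨-, hw⟩ | ⟨rfl, hw⟩⟩ <;> exact hw

theorem neighborSet_leafStar_subset_of_ne {v : V} (hv : v ≠ r) :
    (leafStar r L).neighborSet v ⊆ {r} := by
  rintro w ⟨-, ⟨rfl, -⟩ | ⟨rfl, -⟩⟩
  exacts [absurd rfl hv, rfl]

end SimpleGraph

open SimpleGraph

theorem Simultaneous.injOn_leafStar {V ι β : Type*} {r : V} {L : ι → Set V} {T : Set V}
    {c : Sym2 V → β} (hc : Simultaneous (fun i ↦ leafStar r (L i)) c) (hr : r ∉ T)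
    (hT : ∀ a ∈ T, ∀ b ∈ T, ∃ i, a ∈ L i ∧ b ∈ L i) :
    Set.InjOn (fun a ↦ c s(r, a)) T := by
  intro a ha b hb hab
  by_contra hne
  obtain ⟨i, hai, hbi⟩ := hT a ha b hb
  have hedges : s(r, a) ≠ s(r, b) := fun h ↦ hne (Sym2.congr_right.mp h)
  exact hc i _ (leafStar_adj_center hai (ne_of_mem_of_not_mem ha hr))
    _ (leafStar_adj_center hbi (ne_of_mem_of_not_mem hb hr)) hedges
    ⟨r, Sym2.mem_mk_left _ _, Sym2.mem_mk_left _ _⟩ hab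

theorem Set.ncard_setOf_fst_ne {α β : Type*} [Finite α] [Finite β] (a : α) :
    {p : α × β | p.1 ≠ a}.ncard = (Nat.card α - 1) * Nat.card β := by
  have : {p : α × β | p.1 ≠ a} = ({a}ᶜ : Set α) ×ˢ Set.univ := by ext; simp
  rw [this, Set.ncard_prod, Set.ncard_compl, Set.ncard_singleton, Set.ncard_univ]

theorem simultaneous_coloring_lower_bound_three (Δ : ℕ) (hΔ : 2 ≤ Δ) :
    ∃ (V : Type) (_ : Fintype V) (G : Fin 3 → SimpleGraph V),
      (∀ i v, ((G i).neighborSet v).ncard ≤ Δ) ∧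
      ∀ (N : ℕ) (c : Sym2 V → Fin N), Simultaneous G c → 3 * (Δ / 2) ≤ N := by
  set k := Δ / 2
  let L : Fin 3 → Set (Option (Fin 3 × Fin k)) := fun i ↦ some '' {p | p.1 ≠ i}
  refine ⟨_, inferInstance, fun i ↦ leafStar none (L i), fun i v ↦ ?_, fun N c hc ↦ ?_⟩
  · cases v with
    | none =>
      calc _ ≤ (L i).ncard := Set.ncard_le_ncard neighborSet_leafStar_center_subset
        _ = 2 * k := by
          rw [Set.ncard_image_of_injective _ (Option.some_injective _), Set.ncard_setOf_fst_ne]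
          simp
        _ ≤ Δ := by omega
    | some p =>
      calc _ ≤ ({none} : Set (Option (Fin 3 × Fin k))).ncard :=
            Set.ncard_le_ncard (neighborSet_leafStar_subset_of_ne (Option.some_ne_none p))
        _ ≤ Δ := by rw [Set.ncard_singleton]; omega
  · have hinj : (Set.range some).InjOn (fun a ↦ c s(none, a)) :=
      hc.injOn_leafStar (by simp) <| by
        rintro _ ⟨p, rfl⟩ _ ⟨q, rfl⟩
        obtain ⟨i, hp, hq⟩ := ENat.exists_ne_ne_of_three_le (by simp) p.1 q.1
        exact ⟨i, ⟨p, hp.symm, rfl⟩, ⟨q, hq.symm, rfl⟩⟩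
    have hcard := Fintype.card_le_of_injective (fun p : Fin 3 × Fin k ↦ c s(none, some p))
      fun p q h ↦ Option.some_injective _ (hinj ⟨p, rfl⟩ ⟨q, rfl⟩ h)
    simpa [k, mul_comm] using hcard
end

section
/- Let Δ ≥ 0 be an integer and let G₁, G₂ be simple graphs on a common finite vertex set V, each of maximum degree at most Δ. Then there exists a simultaneous edge-coloring of the union G = G₁ ∪ G₂ with respect to G₁, G₂ using at most 2Δ colors (for Δ ≥ 1). -/
/-- Greedy coloring along a rank function: if every element has fewer than `n` "earlier"
conflicting elements, then `n` colors suffice. -/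
lemma greedy_coloring {α : Type*} [Finite α] (R : α → α → Prop)
    (hsym : ∀ a b, R a b → R b a) (hirr : ∀ a, ¬ R a a)
    (r : α → ℕ) (hinj : Function.Injective r) (n : ℕ) (hn : 0 < n)
    (hdeg : ∀ a, ({b | R a b ∧ r b < r a}).ncard < n) :
    ∃ c : α → Fin n, ∀ a b, R a b → c a ≠ c b := by
  classical
  haveI : Fintype α := Fintype.ofFinite α
  suffices h : ∀ s : Finset α, ∃ c : α → Fin n, ∀ a ∈ s, ∀ b ∈ s, R a b → c a ≠ c b by
    obtain ⟨c, hc⟩ := h Finset.univ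
    exact ⟨c, fun a b hab => hc a (Finset.mem_univ a) b (Finset.mem_univ b) hab⟩
  intro s
  induction s using Finset.strongInduction with
  | _ s ih =>
    rcases s.eq_empty_or_nonempty with rfl | hs
    · exact ⟨fun _ => ⟨0, hn⟩, by simp⟩
    obtain ⟨v, hv, hmax⟩ := s.exists_max_image r hs
    obtain ⟨c, hc⟩ := ih (s.erase v) (Finset.erase_ssubset hv)
    set t := s.erase v with ht
    set forb : Finset (Fin n) := (t.filter (fun u => R v u)).image c with hforb
    have hsub : (↑(t.filter (fun u => R v u)) : Set α) ⊆ {b | R v b ∧ r b < r v} := by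
      intro u hu
      simp only [Finset.coe_filter, Set.mem_setOf_eq] at hu
      obtain ⟨hut, hRu⟩ := hu
      have huv : u ≠ v := Finset.ne_of_mem_erase hut
      have hle : r u ≤ r v := hmax u (Finset.mem_of_mem_erase hut)
      exact ⟨hRu, lt_of_le_of_ne hle (fun h => huv (hinj h))⟩
    have hcard : forb.card < n := by
      have h1 : forb.card ≤ (t.filter (fun u => R v u)).card := Finset.card_image_le
      have h2 : (t.filter (fun u => R v u)).card ≤ ({b | R v b ∧ r b < r v}).ncard := by
        rw [← Set.ncard_coe_finset]
        exact Set.ncard_le_ncard hsub (Set.toFinite _)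
      exact lt_of_le_of_lt (le_trans h1 h2) (hdeg v)
    have hcompl : forbᶜ.Nonempty := by
      rw [← Finset.card_pos, Finset.card_compl, Fintype.card_fin]
      omega
    obtain ⟨b, hb⟩ := hcompl
    rw [Finset.mem_compl] at hb
    refine ⟨Function.update c v b, ?_⟩
    intro x hx y hy hR
    by_cases hxv : x = v <;> by_cases hyv : y = v
    · subst hxv; subst hyv; exact absurd hR (hirr _)
    · subst hxv
      rw [Function.update_self, Function.update_of_ne hyv]
      intro hcy
      apply hb
      rw [hforb]
      exact Finset.mem_image.mpr ⟨y, Finset.mem_filter.mpr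
        ⟨Finset.mem_erase.mpr ⟨hyv, hy⟩, hR⟩, hcy.symm⟩
    · subst hyv
      rw [Function.update_self, Function.update_of_ne hxv]
      intro hcx
      apply hb
      rw [hforb]
      exact Finset.mem_image.mpr ⟨x, Finset.mem_filter.mpr
        ⟨Finset.mem_erase.mpr ⟨hxv, hx⟩, hsym _ _ hR⟩, hcx⟩
    · rw [Function.update_of_ne hxv, Function.update_of_ne hyv]
      exact hc x (Finset.mem_erase.mpr ⟨hxv, hx⟩) y (Finset.mem_erase.mpr ⟨hyv, hy⟩) hR

/-- In a graph of maximum degree at most `Δ ≥ 1`, an edge `e` has fewer than `2Δ` distinct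
edges sharing an endpoint with it. -/
lemma ncard_adjacent_edges_lt {V : Type*} [Finite V] (H : SimpleGraph V) (Δ : ℕ)
    (hΔpos : 1 ≤ Δ) (hd : ∀ v, (H.neighborSet v).ncard ≤ Δ)
    (e : Sym2 V) (he : e ∈ H.edgeSet) :
    ({f | f ∈ H.edgeSet ∧ f ≠ e ∧ ∃ w, w ∈ e ∧ w ∈ f}).ncard < 2 * Δ := by
  classical
  induction e using Sym2.ind with
  | _ u v =>
    have hinc : ∀ x : V, (H.incidenceSet x).ncard = (H.neighborSet x).ncard := by
      intro x
      rw [← Nat.card_coe_set_eq, ← Nat.card_coe_set_eq]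
      exact Nat.card_congr (H.incidenceSetEquivNeighborSet x)
    have hsub : {f | f ∈ H.edgeSet ∧ f ≠ s(u, v) ∧ ∃ w, w ∈ s(u, v) ∧ w ∈ f} ⊆
        (H.incidenceSet u \ {s(u, v)}) ∪ (H.incidenceSet v \ {s(u, v)}) := by
      rintro f ⟨hf, hne, w, hwe, hwf⟩
      rcases Sym2.mem_iff.mp hwe with rfl | rfl
      · exact Or.inl ⟨⟨hf, hwf⟩, hne⟩
      · exact Or.inr ⟨⟨hf, hwf⟩, hne⟩
    have heu : s(u, v) ∈ H.incidenceSet u := ⟨he, Sym2.mem_mk_left u v⟩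
    have hev : s(u, v) ∈ H.incidenceSet v := ⟨he, Sym2.mem_mk_right u v⟩
    have h1 : (H.incidenceSet u \ {s(u, v)}).ncard = (H.incidenceSet u).ncard - 1 :=
      Set.ncard_diff_singleton_of_mem heu
    have h2 : (H.incidenceSet v \ {s(u, v)}).ncard = (H.incidenceSet v).ncard - 1 :=
      Set.ncard_diff_singleton_of_mem hev
    have hu1 : 0 < (H.incidenceSet u).ncard :=
      (Set.ncard_pos (Set.toFinite _)).mpr ⟨_, heu⟩
    have hv1 : 0 < (H.incidenceSet v).ncard :=
      (Set.ncard_pos (Set.toFinite _)).mpr ⟨_, hev⟩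
    have huΔ : (H.incidenceSet u).ncard ≤ Δ := (hinc u).le.trans (hd u)
    have hvΔ : (H.incidenceSet v).ncard ≤ Δ := (hinc v).le.trans (hd v)
    calc ({f | f ∈ H.edgeSet ∧ f ≠ s(u, v) ∧ ∃ w, w ∈ s(u, v) ∧ w ∈ f}).ncard
        ≤ ((H.incidenceSet u \ {s(u, v)}) ∪ (H.incidenceSet v \ {s(u, v)})).ncard :=
          Set.ncard_le_ncard hsub (Set.toFinite _)
      _ ≤ (H.incidenceSet u \ {s(u, v)}).ncard + (H.incidenceSet v \ {s(u, v)}).ncard :=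
          Set.ncard_union_le _ _
      _ < 2 * Δ := by omega

theorem simultaneous_coloring_two_graphs_2Delta {V : Type*} [Fintype V] (Δ : ℕ)
    (hΔpos : 1 ≤ Δ) (G : Fin 2 → SimpleGraph V)
    (hΔ : ∀ i v, ((G i).neighborSet v).ncard ≤ Δ) :
    ∃ c : Sym2 V → Fin (2 * Δ), Simultaneous G c := by
  classical
  -- the conflict relation
  set R : Sym2 V → Sym2 V → Prop := fun e f =>
    e ≠ f ∧ (∃ w, w ∈ e ∧ w ∈ f) ∧ ∃ i, e ∈ (G i).edgeSet ∧ f ∈ (G i).edgeSet with hR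
  have hsym : ∀ a b, R a b → R b a := by
    rintro a b ⟨hne, ⟨w, hw1, hw2⟩, i, h1, h2⟩
    exact ⟨hne.symm, ⟨w, hw2, hw1⟩, i, h2, h1⟩
  have hirr : ∀ a, ¬ R a a := fun a h => h.1 rfl
  -- the rank function: shared edges first
  set K : SimpleGraph V := G 0 ⊓ G 1 with hK
  set ι : Sym2 V ≃ Fin (Fintype.card (Sym2 V)) := Fintype.equivFin (Sym2 V) with hι
  set N : ℕ := Fintype.card (Sym2 V) with hN
  set r : Sym2 V → ℕ := fun e => if e ∈ K.edgeSet then (ι e : ℕ) else N + ι e with hr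
  have hltN : ∀ e : Sym2 V, (ι e : ℕ) < N := fun e => (ι e).isLt
  have hinj : Function.Injective r := by
    intro a b hab
    simp only [hr] at hab
    by_cases ha : a ∈ K.edgeSet <;> by_cases hb : b ∈ K.edgeSet <;>
      simp only [ha, hb, if_pos, if_neg, if_true, if_false, not_false_iff] at hab
    · exact ι.injective (Fin.val_injective hab)
    · exact absurd hab (by have := hltN a; omega)
    · exact absurd hab (by have := hltN b; omega)
    · exact ι.injective (Fin.val_injective (by omega))
  have hdegK : ∀ v, (K.neighborSet v).ncard ≤ Δ := by
    intro v
    refine le_trans (Set.ncard_le_ncard ?_ (Set.toFinite _)) (hΔ 0 v)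
    intro w hw
    exact hw.1
  -- the degree bound for the greedy coloring
  have hdeg : ∀ e : Sym2 V, ({f | R e f ∧ r f < r e}).ncard < 2 * Δ := by
    intro e
    by_cases hsh : e ∈ K.edgeSet
    · -- shared edge: all earlier conflicting edges are shared
      refine lt_of_le_of_lt (Set.ncard_le_ncard ?_ (Set.toFinite _))
        (ncard_adjacent_edges_lt K Δ hΔpos hdegK e hsh)
      rintro f ⟨⟨hne, hshare, i, hei, hfi⟩, hlt⟩
      have hfK : f ∈ K.edgeSet := by
        by_contra hfK
        have hre : r e = (ι e : ℕ) := by simp [hr, hsh]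
        have hrf : r f = N + (ι f : ℕ) := by simp [hr, hfK]
        have := hltN e
        omega
      exact ⟨hfK, hne.symm, hshare⟩
    · rw [SimpleGraph.edgeSet_inf, Set.mem_inter_iff, not_and_or] at hsh
      by_cases h0 : e ∈ (G 0).edgeSet
      · -- e in G 0 only
        have h1 : e ∉ (G 1).edgeSet := by tauto
        refine lt_of_le_of_lt (Set.ncard_le_ncard ?_ (Set.toFinite _))
          (ncard_adjacent_edges_lt (G 0) Δ hΔpos (hΔ 0) e h0)
        rintro f ⟨⟨hne, hshare, i, hei, hfi⟩, _⟩
        fin_cases i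
        · exact ⟨hfi, hne.symm, hshare⟩
        · exact absurd hei h1
      · by_cases h1 : e ∈ (G 1).edgeSet
        · -- e in G 1 only
          refine lt_of_le_of_lt (Set.ncard_le_ncard ?_ (Set.toFinite _))
            (ncard_adjacent_edges_lt (G 1) Δ hΔpos (hΔ 1) e h1)
          rintro f ⟨⟨hne, hshare, i, hei, hfi⟩, _⟩
          fin_cases i
          · exact absurd hei h0
          · exact ⟨hfi, hne.symm, hshare⟩
        · -- e is not an edge at all
          have : {f | R e f ∧ r f < r e} = ∅ := by
            ext f
            simp only [Set.mem_setOf_eq, Set.mem_empty_iff_false, iff_false, not_and]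
            rintro ⟨hne, hshare, i, hei, hfi⟩
            fin_cases i
            · exact fun _ => h0 hei
            · exact fun _ => h1 hei
          rw [this, Set.ncard_empty]
          omega
  obtain ⟨c, hc⟩ := greedy_coloring R hsym hirr r hinj (2 * Δ) (by omega) hdeg
  refine ⟨c, ?_⟩
  intro i e he f hf hne hshare
  exact hc e f ⟨hne, hshare, i, he, hf⟩
end
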